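/- Let q be an odd prime power and let C be an [n,k] Euclidean self-orthogonal code over F_q with n even and n ≥ 2k+2. Then C is contained in a Euclidean self-orthogonal code of dimension n/2 - 1. -/

import Mathlib

/-!
Over a finite field every quadratic form in at least three variables has a nontrivial zero
(Chevalley–Warning: it is homogeneous of degree 2 < 3). If `C` is totally isotropic for a
nondegenerate reflexive form on `V` and `dim V ≥ 2 dim C + 3`, a complement of `C` in `C^⊥`
has dimension `dim V - 2 dim C ≥ 3`, so it contains an isotropic vector `v ≠ 0`, and
`C ⊔ ⟨v⟩` is totally isotropic of dimension `dim C + 1`. Iterating reaches every dimension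
`m` with `2m + 1 ≤ dim V`; for the dot product on `F^n` take `m = n/2 - 1`.
-/

open Module
open LinearMap (BilinForm)

theorem MvPolynomial.exists_ne_zero_eval_eq_zero_of_totalDegree_lt
    {K σ : Type*} [Field K] [Fintype K] [Fintype σ]
    {f : MvPolynomial σ K} (h0 : eval 0 f = 0) (h : f.totalDegree < Fintype.card σ) :
    ∃ x ≠ 0, eval x f = 0 := by
  classical
  obtain ⟨p, hchar⟩ := CharP.exists K
  have hcard : 1 < Fintype.card { x : σ → K // eval x f = 0 } :=
    (CharP.char_is_prime K p).one_lt.trans_le <|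
      Nat.le_of_dvd (Fintype.card_pos_iff.mpr ⟨⟨0, h0⟩⟩) (char_dvd_card_solutions p h)
  obtain ⟨⟨x, hx⟩, hne⟩ := Fintype.exists_ne_of_one_lt_card hcard ⟨0, h0⟩
  exact ⟨x, fun h => hne (Subtype.ext h), hx⟩

namespace LinearMap.BilinForm

variable {K V : Type*} [Field K] [AddCommGroup V] [Module K V]

open MvPolynomial in
theorem exists_ne_zero_apply_self_eq_zero [Fintype K] [FiniteDimensional K V]
    (B : BilinForm K V) (h : 3 ≤ finrank K V) : ∃ v ≠ 0, B v v = 0 := by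
  let b := finBasis K V
  let f : MvPolynomial (Fin (finrank K V)) K := ∑ i, ∑ j, C (B (b i) (b j)) * (X i * X j)
  have hf : f.IsHomogeneous 2 :=
    IsHomogeneous.sum _ _ _ fun i _ => IsHomogeneous.sum _ _ _ fun j _ =>
      (isHomogeneous_C _ _).mul ((isHomogeneous_X _ _).mul (isHomogeneous_X _ _))
  have heval : ∀ x, eval x f = B (b.equivFun.symm x) (b.equivFun.symm x) := by
    intro x
    simp only [f, map_sum, map_mul, eval_C, eval_X, Basis.equivFun_symm_apply,
      LinearMap.sum_apply, map_smul, LinearMap.smul_apply, smul_eq_mul, Finset.mul_sum]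
    rw [Finset.sum_comm]
    exact Finset.sum_congr rfl fun i _ => Finset.sum_congr rfl fun j _ => by ring
  obtain ⟨x, hx, hfx⟩ := exists_ne_zero_eval_eq_zero_of_totalDegree_lt (f := f)
    (by simp [f]) (hf.totalDegree_le.trans_lt (by rw [Fintype.card_fin]; omega))
  exact ⟨b.equivFun.symm x, b.equivFun.symm.map_ne_zero_iff.mpr hx, (heval x).symm.trans hfx⟩

variable {B : BilinForm K V} {C : Submodule K V}

theorem sup_span_singleton_le_orthogonal (hB₀ : B.IsRefl) (hC : C ≤ B.orthogonal C) {v : V}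
    (hv : v ∈ B.orthogonal C) (hvv : B v v = 0) :
    C ⊔ K ∙ v ≤ B.orthogonal (C ⊔ K ∙ v) := by
  rintro _ hx _ hy
  obtain ⟨c, hc, _, hs, rfl⟩ := Submodule.mem_sup.mp hx
  obtain ⟨c', hc', _, hs', rfl⟩ := Submodule.mem_sup.mp hy
  obtain ⟨a, rfl⟩ := Submodule.mem_span_singleton.mp hs
  obtain ⟨a', rfl⟩ := Submodule.mem_span_singleton.mp hs'
  simp [hC hc c' hc', hv c' hc', hB₀ _ _ (hv c hc), hvv]

theorem exists_mem_orthogonal_notMem_apply_self_eq_zero [Fintype K] [FiniteDimensional K V]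
    (hB : B.Nondegenerate) (hC : C ≤ B.orthogonal C) (h : 2 * finrank K C + 3 ≤ finrank K V) :
    ∃ v ∈ B.orthogonal C, v ∉ C ∧ B v v = 0 := by
  set W := B.orthogonal C
  obtain ⟨U, hU⟩ := Submodule.exists_isCompl (C.comap W.subtype)
  have hUrank : finrank K U = finrank K W - finrank K C := by
    rw [← (Submodule.comapSubtypeEquivOfLe hC).finrank_eq,
      ← Submodule.finrank_add_eq_of_isCompl hU]
    omega
  have hWrank : finrank K W = finrank K V - finrank K C := finrank_orthogonal hB C
  obtain ⟨u, hu, huu⟩ :=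
    exists_ne_zero_apply_self_eq_zero ((B.restrict W).restrict U) (by omega)
  refine ⟨(u : W), (u : W).2, fun huC => hu (Subtype.ext ?_), huu⟩
  exact Submodule.disjoint_def.mp hU.disjoint _ huC u.2

theorem exists_le_finrank_eq_add_one_le_orthogonal [Fintype K] [FiniteDimensional K V]
    (hB : B.Nondegenerate) (hB₀ : B.IsRefl) (hC : C ≤ B.orthogonal C)
    (h : 2 * finrank K C + 3 ≤ finrank K V) :
    ∃ D : Submodule K V, C ≤ D ∧ finrank K D = finrank K C + 1 ∧ D ≤ B.orthogonal D := by
  obtain ⟨v, hv, hvC, hvv⟩ := exists_mem_orthogonal_notMem_apply_self_eq_zero hB hC h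
  exact ⟨C ⊔ K ∙ v, le_sup_left, Submodule.finrank_sup_span_singleton hvC,
    sup_span_singleton_le_orthogonal hB₀ hC hv hvv⟩

theorem exists_le_finrank_eq_le_orthogonal [Fintype K] [FiniteDimensional K V]
    (hB : B.Nondegenerate) (hB₀ : B.IsRefl) (hC : C ≤ B.orthogonal C) {m : ℕ}
    (hCm : finrank K C ≤ m) (hm : 2 * m + 1 ≤ finrank K V) :
    ∃ D : Submodule K V, C ≤ D ∧ finrank K D = m ∧ D ≤ B.orthogonal D := by
  induction m, hCm using Nat.le_induction with
  | base => exact ⟨C, le_rfl, rfl, hC⟩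
  | succ m hCm ih =>
    obtain ⟨D, hCD, hDm, hD⟩ := ih (by omega)
    obtain ⟨E, hDE, hEm, hE⟩ :=
      exists_le_finrank_eq_add_one_le_orthogonal hB hB₀ hD (by omega)
    exact ⟨E, hCD.trans hDE, hDm ▸ hEm, hE⟩

end LinearMap.BilinForm

section dotProduct

variable (R n : Type*) [CommRing R] [Fintype n]

theorem dotProductBilin_isRefl : (dotProductBilin R R : BilinForm R (n → R)).IsRefl :=
  fun x y h => by rwa [dotProductBilin_apply_apply, dotProduct_comm] at h

theorem dotProductBilin_nondegenerate :
    (dotProductBilin R R : BilinForm R (n → R)).Nondegenerate :=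
  (dotProductBilin_isRefl R n).nondegenerate_iff_separatingLeft.mpr dotProduct_eq_zero

end dotProduct

theorem stmt12_general (F : Type) [Field F] [Fintype F]
    (n k : ℕ) (hnk : n ≥ 2 * k + 2)
    (C : Submodule F (Fin n → F)) (hdim : Module.finrank F C = k)
    (hso : ∀ x ∈ C, ∀ y ∈ C, ∑ i, x i * y i = 0) :
    ∃ D : Submodule F (Fin n → F), C ≤ D ∧ Module.finrank F D = n / 2 - 1 ∧
      ∀ x ∈ D, ∀ y ∈ D, ∑ i, x i * y i = 0 := by
  have hC : C ≤ BilinForm.orthogonal (dotProductBilin F F) C :=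
    fun y hy x hx => hso x hx y hy
  obtain ⟨D, hCD, hD, hDD⟩ := LinearMap.BilinForm.exists_le_finrank_eq_le_orthogonal
    (dotProductBilin_nondegenerate F (Fin n)) (dotProductBilin_isRefl F (Fin n))
    hC (m := n / 2 - 1) (by omega) (by rw [finrank_fin_fun]; omega)
  exact ⟨D, hCD, hD, fun x hx y hy => hDD hy x hx⟩

/-- over F_q with q odd, an [n,k] Euclidean self-orthogonal code with n
even and n ≥ 2k+2 is contained in a Euclidean self-orthogonal code of dimension
n/2 - 1. -/
theorem stmt12 (F : Type) [Field F] [Fintype F] (hq : Odd (Fintype.card F))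
    (n k : ℕ) (hn : Even n) (hnk : n ≥ 2 * k + 2)
    (C : Submodule F (Fin n → F)) (hdim : Module.finrank F C = k)
    (hso : ∀ x ∈ C, ∀ y ∈ C, ∑ i, x i * y i = 0) :
    ∃ D : Submodule F (Fin n → F), C ≤ D ∧ Module.finrank F D = n / 2 - 1 ∧
      ∀ x ∈ D, ∀ y ∈ D, ∑ i, x i * y i = 0 :=
  stmt12_general F n k hnk C hdim hso
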